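/- Let g ≥ 2 and let r₁ ≥ r₂ ≥ r₃ ≥ 2 be integers with 1 - 1/r₁ - 1/r₂ - 1/r₃ > 0 and r₁ · (1 - 1/r₁ - 1/r₂ - 1/r₃) ≤ 2g - 2. Then r₁ ≤ 6(2g - 1). -/
import Mathlib


/-- Let `g ≥ 2` and `r₁ ≥ r₂ ≥ r₃ ≥ 2` be integers with `1 - 1/r₁ - 1/r₂ - 1/r₃ > 0`
and `r₁ (1 - 1/r₁ - 1/r₂ - 1/r₃) ≤ 2g - 2`.  Then `r₁ ≤ 6(2g - 1)`. -/
theorem stmt_7 (g r1 r2 r3 : ℤ) (hg : 2 ≤ g) (h3 : 2 ≤ r3) (h23 : r3 ≤ r2)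
    (h12 : r2 ≤ r1)
    (hpos : 0 < 1 - 1 / (r1 : ℚ) - 1 / (r2 : ℚ) - 1 / (r3 : ℚ))
    (hineq : (r1 : ℚ) * (1 - 1 / (r1 : ℚ) - 1 / (r2 : ℚ) - 1 / (r3 : ℚ))
      ≤ 2 * (g : ℚ) - 2) :
    r1 ≤ 6 * (2 * g - 1) := by
  have hgq : (2:ℚ) ≤ (g:ℚ) := by exact_mod_cast hg
  have h3q : (2:ℚ) ≤ (r3:ℚ) := by exact_mod_cast h3
  have h23q : (r3:ℚ) ≤ (r2:ℚ) := by exact_mod_cast h23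
  have h12q : (r2:ℚ) ≤ (r1:ℚ) := by exact_mod_cast h12
  have p3 : (0:ℚ) < r3 := by linarith
  have p2 : (0:ℚ) < r2 := by linarith
  have p1 : (0:ℚ) < r1 := by linarith
  have e1 : (r1:ℚ) * (1/(r1:ℚ)) = 1 := mul_one_div_cancel (ne_of_gt p1)
  have key : (r1:ℚ) - 1 - (r1:ℚ) * (1/(r2:ℚ)) - (r1:ℚ) * (1/(r3:ℚ)) ≤ 2*(g:ℚ) - 2 := by
    nlinarith [hineq]
  -- goal in ℚ
  have goal : (r1:ℚ) ≤ 6 * (2*(g:ℚ) - 1) := by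
    rcases le_or_gt 3 (r3:ℚ) with h | h
    · -- r3 ≥ 3, so 1/r2, 1/r3 ≤ 1/3
      have i3 : 1/(r3:ℚ) ≤ 1/3 := by
        rw [div_le_div_iff₀ p3 (by norm_num)]; linarith
      have i2 : 1/(r2:ℚ) ≤ 1/3 := by
        rw [div_le_div_iff₀ p2 (by norm_num)]; linarith
      nlinarith [mul_le_mul_of_nonneg_left i3 (le_of_lt p1),
        mul_le_mul_of_nonneg_left i2 (le_of_lt p1)]
    · -- r3 = 2
      have hr3 : (r3:ℚ) = 2 := by
        have : r3 < 3 := by exact_mod_cast h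
        have : r3 = 2 := by omega
        exact_mod_cast this
      have hr2 : (3:ℚ) ≤ (r2:ℚ) := by
        by_contra hc
        push_neg at hc
        have : r2 = 2 := by
          have : (r2:ℚ) < 3 := hc
          have h' : r2 < 3 := by exact_mod_cast this
          omega
        have hr2q : (r2:ℚ) = 2 := by exact_mod_cast this
        rw [hr2q, hr3] at hpos
        have : 0 < -(1/(r1:ℚ)) := by linarith
        have : 0 < 1/(r1:ℚ) := by positivity
        linarith
      have i2 : 1/(r2:ℚ) ≤ 1/3 := by
        rw [div_le_div_iff₀ p2 (by norm_num)]; linarith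
      rw [hr3] at key
      nlinarith [mul_le_mul_of_nonneg_left i2 (le_of_lt p1)]
  exact_mod_cast goal
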